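/- Under the assumption α̃_k = α_k and β̂_k = β_k for all k, the bias of the doubly robust estimator can be rearranged as (1/D) Σ_k Δ_{α_k}(γ_{q,d} - γ̂^imp_{q,d})/α̂_k, i.e., it is the product form in which each summand vanishes if either the propensity error Δ_{α_k} = α_k - α̂_k or the imputation error γ_{q,d} - γ̂^imp_{q,d} is zero. -/

import Mathlib

/-- Expectation over D independent Bernoulli clicks with success probabilities `p i`. -/
noncomputable def expec {D : ℕ} (p : Fin D → ℝ) (f : (Fin D → Bool) → ℝ) : ℝ :=
  ∑ c : Fin D → Bool, (∏ i, if c i then p i else 1 - p i) * f c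

/-!
Under `α̃ = α` and `β̂ = β`, the correction term at position `k` has conditional mean
`(α_k γ + β_k - β_k - α_k γ̂^imp) / α̂_k = α_k (γ - γ̂^imp) / α̂_k` by linearity of expectation,
and subtracting the `1/D`-average of `γ - γ̂^imp` leaves `(α_k - α̂_k)(γ - γ̂^imp) / α̂_k`.
-/

section

variable {D : ℕ} (p : Fin D → ℝ)

lemma expec_add (f g : (Fin D → Bool) → ℝ) :
    expec p (fun c => f c + g c) = expec p f + expec p g := by
  simp only [expec, mul_add, Finset.sum_add_distrib]

lemma expec_const_mul (a : ℝ) (f : (Fin D → Bool) → ℝ) :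
    expec p (fun c => a * f c) = a * expec p f := by
  simp only [expec, Finset.mul_sum, mul_left_comm a]

lemma expec_sum {ι : Type*} (s : Finset ι) (f : ι → (Fin D → Bool) → ℝ) :
    expec p (fun c => ∑ i ∈ s, f i c) = ∑ i ∈ s, expec p (f i) := by
  simp only [expec, Finset.mul_sum]
  exact Finset.sum_comm

lemma expec_comp_eval (i : Fin D) (g : Bool → ℝ) :
    expec p (fun c => g (c i)) = p i * g true + (1 - p i) * g false := by
  -- The summand factors over coordinates; every factor but the `i`-th sums to `p j + (1 - p j) = 1`.
  let h : Fin D → Bool → ℝ := fun j b =>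
    (if b then p j else 1 - p j) * if j = i then g b else 1
  have factor : ∀ c : Fin D → Bool,
      (∏ j, if c j then p j else 1 - p j) * g (c i) = ∏ j, h j (c j) := by
    intro c
    simp only [h, Finset.prod_mul_distrib, Finset.prod_ite_eq', Finset.mem_univ, if_true]
  have other_factors : ∀ j ≠ i, ∑ b, h j b = 1 := by
    intro j hj
    simp [h, hj]
  simp only [expec, factor, ← Fintype.prod_sum]
  rw [Finset.prod_eq_single i (fun j _ hj => other_factors j hj) (by simp)]
  simp [h]

lemma expec_const (a : ℝ) : expec p (fun _ => a) = a := by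
  have mass_one : ∑ c : Fin D → Bool, ∏ j, (if c j then p j else 1 - p j) = 1 := by
    rw [← Fintype.prod_sum (fun j (b : Bool) => if b then p j else 1 - p j)]
    simp
  simp only [expec, ← Finset.sum_mul, mass_one, one_mul]

end

theorem dr_bias_product_form_general (D : ℕ) (hD : 0 < D) (ks : Fin D → ℕ)
    (α β αhat βhat αtilde : ℕ → ℝ) (γ γimp : ℝ)
    (hαhat : ∀ k, αhat k ≠ 0)
    (hta : ∀ i, αtilde (ks i) = α (ks i)) (hb : ∀ i, βhat (ks i) = β (ks i)) :
    expec (fun i => α (ks i) * γ + β (ks i))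
        (fun c => γimp + (1 / (D : ℝ)) *
          ∑ i, ((if c i then (1:ℝ) else 0) - βhat (ks i) - αtilde (ks i) * γimp) / αhat (ks i))
      - γ
    = (1 / (D : ℝ)) * ∑ i,
        (α (ks i) - αhat (ks i)) * (γ - γimp) / αhat (ks i) := by
  set p : Fin D → ℝ := fun i => α (ks i) * γ + β (ks i)
  have correction_mean : ∀ i, expec p (fun c =>
      ((if c i then (1:ℝ) else 0) - βhat (ks i) - αtilde (ks i) * γimp) / αhat (ks i))
      = (α (ks i) - αhat (ks i)) * (γ - γimp) / αhat (ks i) + (γ - γimp) := by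
    intro i
    rw [expec_comp_eval p i (fun b => ((if b then (1:ℝ) else 0) - βhat (ks i)
      - αtilde (ks i) * γimp) / αhat (ks i)), hta, hb]
    simp only [p, if_true, Bool.false_eq_true, if_false]
    field_simp [hαhat (ks i)]
    ring
  have hD' : (D : ℝ) ≠ 0 := by positivity
  rw [expec_add, expec_const, expec_const_mul, expec_sum]
  simp only [correction_mean, Finset.sum_add_distrib, Finset.sum_const, Finset.card_univ,
    Fintype.card_fin, nsmul_eq_mul]
  rw [mul_add, ← mul_assoc, one_div_mul_cancel hD', one_mul]
  ring

/-- with α̃_k = α_k and β̂_k = β_k, the bias of the DR estimator takes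
the product form (1/D) Σ Δα_k (γ - γ̂^imp)/α̂_k. -/
theorem dr_bias_product_form (D : ℕ) (hD : 0 < D) (ks : Fin D → ℕ)
    (α β αhat βhat αtilde : ℕ → ℝ) (γ γimp : ℝ)
    (hαhat : ∀ k, αhat k ≠ 0)
    (hp : ∀ i, α (ks i) * γ + β (ks i) ∈ Set.Icc (0:ℝ) 1)
    (hta : ∀ i, αtilde (ks i) = α (ks i)) (hb : ∀ i, βhat (ks i) = β (ks i)) :
    expec (fun i => α (ks i) * γ + β (ks i))
        (fun c => γimp + (1 / (D : ℝ)) *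
          ∑ i, ((if c i then (1:ℝ) else 0) - βhat (ks i) - αtilde (ks i) * γimp) / αhat (ks i))
      - γ
    = (1 / (D : ℝ)) * ∑ i,
        (α (ks i) - αhat (ks i)) * (γ - γimp) / αhat (ks i) :=
  dr_bias_product_form_general D hD ks α β αhat βhat αtilde γ γimp hαhat hta hb
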